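/- arXiv:1711.02852 — 7 statements merged into one kernel-verified Lean document; each statement's English description precedes it below -/
import Mathlib

section
/- Let x = (x_1,...,x_n) be a vector of nonnegative integers and suppose x_i > x_{i+1} for some 1 ≤ i ≤ n-1. Let x' be obtained from x by replacing x_i with x_{i+1}. Then the set of x-dominated paths ending at (x_n, n) equals the set of x'-dominated paths ending at (x_n, n); in particular ψ(x) = ψ(x'). -/
/-- A monotone lattice path, encoded as a list of steps (`true` = up, `false` = right),
is an `x`-dominated path ending at `(x n, n)` if it has `n` up-steps, `x n` right-steps,
and every vertex `(i, j)` on it with `j < n` satisfies `i ≤ x (j+1)`. -/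
def Dominated (n : ℕ) (x : ℕ → ℕ) (s : List Bool) : Prop :=
  s.count true = n ∧ s.count false = x n ∧
    ∀ k, (s.take k).count true < n →
      (s.take k).count false ≤ x ((s.take k).count true + 1)

/-- `psi n x` is the number of `x`-dominated monotone lattice paths from `(0,0)` to `(x n, n)`. -/
noncomputable def psi (n : ℕ) (x : ℕ → ℕ) : ℕ :=
  Set.ncard {s : List Bool | Dominated n x s}

/-!
A dominated path climbs from height `i - 1` to height `i` before it reaches height `i + 1`, and
its horizontal coordinate never decreases. Hence every vertex at height `i - 1` lies weakly left
of the last vertex at height `i`, which is bounded by `x (i + 1)`; so lowering `x i` to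
`x (i + 1)` removes no path, and it adds none either since it only tightens a constraint.
-/

namespace List

variable {α : Type*} [BEq α] (s : List α) (c : α) (k : ℕ)

lemma count_take_succ_le :
    (s.take (k + 1)).count c ≤ (s.take k).count c + 1 := by
  rw [take_add_one, count_append]
  have : (s[k]?).toList.count c ≤ 1 := by
    rcases s[k]? with _ | b
    · simp
    · simp only [Option.toList_some, count_singleton]
      split <;> simp
  omega

lemma count_take_le_succ :
    (s.take k).count c ≤ (s.take (k + 1)).count c :=
  (take_sublist_take_left k.le_succ).count_le c

end List

namespace Dominated

variable {n : ℕ} {x y : ℕ → ℕ} {s : List Bool}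

lemma count_false_take_le (h : Dominated n x s) {j : ℕ} (hj : j < n) :
    ∀ k, (s.take k).count true ≤ j → (s.take k).count false ≤ x (j + 1) := by
  obtain ⟨hup, -, hbound⟩ := h
  -- downward induction on `k`, through the remaining length `s.length - k`
  suffices ∀ d k, s.length - k = d → (s.take k).count true ≤ j →
      (s.take k).count false ≤ x (j + 1) from fun k => this _ k rfl
  intro d
  induction d with
  | zero =>
    intro k hd hk
    rw [List.take_of_length_le (by omega), hup] at hk
    omega
  | succ d ih =>
    intro k hd hk
    rcases hk.lt_or_eq with hlt | rfl
    · have hk' : (s.take (k + 1)).count true ≤ j :=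
        (List.count_take_succ_le s true k).trans (by omega)
      calc (s.take k).count false
          ≤ (s.take (k + 1)).count false := List.count_take_le_succ s false k
        _ ≤ x (j + 1) := ih (k + 1) (by omega) hk'
    · exact hbound k hj

lemma of_le (h : Dominated n y s) (hyx : y ≤ x) (hn : y n = x n) :
    Dominated n x s := by
  obtain ⟨hup, hright, hbound⟩ := h
  exact ⟨hup, hn ▸ hright, fun k hk => (hbound k hk).trans (hyx _)⟩

lemma update_succ (h : Dominated n x s) {i : ℕ} (hi : i < n) :
    Dominated n (Function.update x i (x (i + 1))) s := by
  refine ⟨h.1, by rw [Function.update_of_ne hi.ne']; exact h.2.1, fun k hk => ?_⟩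
  by_cases hki : (s.take k).count true + 1 = i
  · rw [hki, Function.update_self]
    exact h.count_false_take_le hi k (by omega)
  · rw [Function.update_of_ne hki]
    exact h.2.2 k hk

end Dominated

/-- If `x_i > x_{i+1}` for some `1 ≤ i ≤ n - 1`, and `x'` is obtained from `x` by
replacing `x_i` with `x_{i+1}`, then the `x`-dominated paths ending at `(x_n, n)` are
exactly the `x'`-dominated ones; in particular `ψ(x) = ψ(x')`. -/
theorem stmt_4 (n : ℕ) (x : ℕ → ℕ) (i : ℕ) (hi1 : 1 ≤ i) (hin : i ≤ n - 1)
    (hgt : x (i + 1) < x i) :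
    {s : List Bool | Dominated n x s} =
        {s : List Bool | Dominated n (Function.update x i (x (i + 1))) s} ∧
      psi n x = psi n (Function.update x i (x (i + 1))) := by
  have hi : i < n := by omega
  have hle : Function.update x i (x (i + 1)) ≤ x :=
    update_le_iff.2 ⟨hgt.le, fun _ _ => le_rfl⟩
  have hset : {s : List Bool | Dominated n x s} =
      {s : List Bool | Dominated n (Function.update x i (x (i + 1))) s} := by
    ext s
    exact ⟨fun h => h.update_succ hi,
      fun h => h.of_le hle (Function.update_of_ne hi.ne' _ _)⟩
  exact ⟨hset, by rw [psi, psi, hset]⟩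
end

section
/- For any vector x = (x_1,...,x_n) of nonnegative integers, ψ(x) = ψ(x*), where x* is the componentwise maximum reduced vector with x* ≤ x, i.e. x*_i = min(x_i, x_{i+1}, ..., x_n). -/
/-- Characterization of `xstar` as a running minimum. -/
lemma xstar_key (n : ℕ) (x xstar : ℕ → ℕ)
    (h1 : xstar n = x n)
    (h2 : ∀ i, 1 ≤ i → i < n → xstar i = min (x i) (xstar (i + 1))) :
    ∀ d i, n - i = d → 1 ≤ i → i ≤ n → ∀ c,
      (c ≤ xstar i ↔ ∀ m, i ≤ m → m ≤ n → c ≤ x m) := by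
  intro d
  induction d with
  | zero =>
    intro i hd hi1 hin c
    have : i = n := le_antisymm hin (by omega)
    subst this
    rw [h1]
    constructor
    · intro h m hm1 hm2
      have : m = i := le_antisymm hm2 hm1
      rwa [this]
    · intro h; exact h i le_rfl le_rfl
  | succ d ih =>
    intro i hd hi1 hin c
    have hlt : i < n := by omega
    rw [h2 i hi1 hlt, le_min_iff, ih (i + 1) (by omega) (by omega) (by omega) c]
    constructor
    · rintro ⟨ha, hb⟩ m hm1 hm2
      rcases eq_or_lt_of_le hm1 with rfl | h
      · exact ha
      · exact hb m h hm2
    · intro h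
      exact ⟨h i le_rfl hin, fun m hm1 hm2 => h m (by omega) hm2⟩

lemma count_mono (s : List Bool) (b : Bool) {k k' : ℕ} (h : k ≤ k') :
    (s.take k).count b ≤ (s.take k').count b := by
  have : ((s.take k').take k) = s.take k := by
    rw [List.take_take, min_eq_left h]
  rw [← this]
  exact ((s.take k').take_sublist k).count_le b

lemma count_succ_le (s : List Bool) (k : ℕ) :
    (s.take (k + 1)).count true ≤ (s.take k).count true + 1 := by
  rw [List.take_succ, List.count_append]
  have : (s[k]?.toList).count true ≤ 1 := by
    cases h : s[k]? <;> simp [List.count_cons, List.count_nil]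
    split <;> omega
  omega

/-- Intermediate value property for up-step counts along a path. -/
lemma count_exists (s : List Bool) (t : ℕ) (ht : t ≤ s.count true) :
    ∀ d k, s.length - k = d → (s.take k).count true ≤ t →
      ∃ k', k ≤ k' ∧ (s.take k').count true = t := by
  intro d
  induction d with
  | zero =>
    intro k hd hk
    have hk' : s.length ≤ k := by omega
    have : s.take k = s := List.take_of_length_le hk'
    rw [this] at hk
    exact ⟨k, le_rfl, by rw [this]; omega⟩
  | succ d ih =>
    intro k hd hk
    rcases eq_or_lt_of_le hk with heq | hlt
    · exact ⟨k, le_rfl, heq⟩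
    · obtain ⟨k', hk1, hk2⟩ := ih (k + 1) (by omega)
        (le_trans (count_succ_le s k) (by omega))
      exact ⟨k', by omega, hk2⟩

theorem dominated_iff (n : ℕ) (x xstar : ℕ → ℕ)
    (h1 : xstar n = x n)
    (h2 : ∀ i, 1 ≤ i → i < n → xstar i = min (x i) (xstar (i + 1)))
    (s : List Bool) : Dominated n x s ↔ Dominated n xstar s := by
  have key := xstar_key n x xstar h1 h2
  constructor
  · rintro ⟨ht, hf, hd⟩
    refine ⟨ht, by rw [hf, h1], fun k hk => ?_⟩
    set j := (s.take k).count true with hj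
    rw [key (n - (j + 1)) (j + 1) rfl (by omega) (by omega)]
    intro m hm1 hm2
    obtain ⟨k', hkk', hk'⟩ := count_exists s (m - 1) (by omega)
      (s.length - k) k rfl (by omega)
    have := hd k' (by omega)
    rw [hk'] at this
    have hxm : (s.take k').count false ≤ x m := by
      have : (s.take k').count false ≤ x (m - 1 + 1) := this
      rwa [Nat.sub_add_cancel (by omega)] at this
    exact le_trans (count_mono s false hkk') hxm
  · rintro ⟨ht, hf, hd⟩
    refine ⟨ht, by rw [hf, h1], fun k hk => ?_⟩
    set j := (s.take k).count true with hj
    have := hd k hk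
    rw [key (n - (j + 1)) (j + 1) rfl (by omega) (by omega)] at this
    exact this (j + 1) le_rfl (by omega)

/-- `ψ(x) = ψ(x*)`, where `x*` is the componentwise maximum reduced vector below `x`,
i.e. `x*_i = min (x_i, x_{i+1}, …, x_n)`; equivalently `x*_n = x_n` and
`x*_i = min (x_i, x*_{i+1})` for `1 ≤ i < n`. -/
theorem stmt_5 (n : ℕ) (x xstar : ℕ → ℕ)
    (h1 : xstar n = x n)
    (h2 : ∀ i, 1 ≤ i → i < n → xstar i = min (x i) (xstar (i + 1))) :
    psi n x = psi n xstar := by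
  unfold psi
  congr 1
  ext s
  exact dominated_iff n x xstar h1 h2 s
end

section
/- Let G = K_{n,m} be the complete bipartite graph with parts A = {v_1,...,v_n} and B = {u_1,...,u_m}, and let f assign a positive integer f(v_i) to each v_i and f(u_j) = n to each u_j. If m ≥ ∏_{i=1}^n f(v_i), then G is not f-choosable: there exists an f-list assignment L of G (assigning each vertex v a set L(v) of f(v) colours) such that G has no proper colouring φ with φ(v) ∈ L(v) for all v. -/
/-- A graph `G` with list sizes `f` is `f`-choosable if for every assignment `L` of lists
of colours with `|L v| = f v` for all `v`, there is a proper colouring of `G` choosing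
each vertex's colour from its list. -/
def Choosable {V : Type*} (G : SimpleGraph V) (f : V → ℕ) : Prop :=
  ∀ L : V → Finset ℕ, (∀ v, (L v).card = f v) →
    ∃ c : V → ℕ, (∀ v, c v ∈ L v) ∧ ∀ ⦃u v⦄, G.Adj u v → c u ≠ c v

/-- If `K_{n,m}` has parts `A = {v_1,…,v_n}` and `B` of size `m`, each `v_i` has list size
`f v_i > 0`, each vertex of `B` has list size `n`, and `m ≥ ∏ f v_i`, then `K_{n,m}` is
not `f`-choosable. -/
theorem stmt_7 (n m : ℕ) (f : Fin n → ℕ) (hf : ∀ i, 0 < f i)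
    (hm : ∏ i, f i ≤ m) :
    ¬ Choosable (completeBipartiteGraph (Fin n) (Fin m))
      (Sum.elim f fun _ => n) := by
  intro hch
  -- the type of transversals
  have hcard : Fintype.card (∀ i, Fin (f i)) ≤ Fintype.card (Fin m) := by
    simpa using hm
  obtain ⟨ι⟩ : Nonempty ((∀ i, Fin (f i)) ↪ Fin m) :=
    Function.Embedding.nonempty_of_card_le hcard
  have hne : Nonempty (∀ i, Fin (f i)) := ⟨fun i => ⟨0, hf i⟩⟩
  set σ : Fin m → ∀ i, Fin (f i) := Function.invFun ι with hσ
  have hσι : ∀ t, σ (ι t) = t := fun t => Function.leftInverse_invFun ι.injective t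
  set L : Fin n ⊕ Fin m → Finset ℕ := fun v =>
    match v with
    | Sum.inl i => (Finset.range (f i)).image (fun k => Nat.pair i k)
    | Sum.inr j => Finset.univ.image (fun i : Fin n => Nat.pair i (σ j i)) with hL
  have hLc : ∀ v, (L v).card = Sum.elim f (fun _ => n) v := by
    rintro (i | j)
    · simp only [L]
      rw [Finset.card_image_of_injective _ (fun a b h => by
        simpa using (Nat.pair_eq_pair.mp h).2)]
      simp
    · simp only [L]
      rw [Finset.card_image_of_injective _ (fun a b h => by
        exact_mod_cast Fin.ext (by exact_mod_cast (Nat.pair_eq_pair.mp h).1))]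
      simp
  obtain ⟨c, hc, hcp⟩ := hch L hLc
  -- extract the colours of the left vertices
  have hleft : ∀ i : Fin n, ∃ k : Fin (f i), c (Sum.inl i) = Nat.pair i k := by
    intro i
    have := hc (Sum.inl i)
    simp only [L, Finset.mem_image, Finset.mem_range] at this
    obtain ⟨k, hk, hk2⟩ := this
    exact ⟨⟨k, hk⟩, hk2.symm⟩
  choose t ht using hleft
  set j := ι t with hj
  have := hc (Sum.inr j)
  simp only [L, Finset.mem_image, Finset.mem_univ, true_and] at this
  obtain ⟨i, hi⟩ := this
  have hadj : (completeBipartiteGraph (Fin n) (Fin m)).Adj (Sum.inl i) (Sum.inr j) := by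
    simp
  exact hcp hadj (by rw [ht i, ← hi, hj, hσι])
end

section
/- Let G = K_{n,m} be the complete bipartite graph with parts A = {v_1,...,v_n} and B of size m, and let f(v_i) be positive integers for v_i ∈ A and f(u) = n for u ∈ B. If m < ∏_{i=1}^n f(v_i), then G is f-choosable. -/
/-!
Choose the colours `c i ∈ L vᵢ` on the side `A` first. A vertex `u ∈ B` can then be coloured
unless `L u ⊆ {c 1, …, c n}`, which, as `|L u| = n`, forces `L u = {c 1, …, c n}`. If two lists
on `A` meet, let two vertices share a colour: then `c` uses fewer than `n` colours. Otherwise the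
lists on `A` are pairwise disjoint, so distinct choices `c` give distinct colour sets; there are
`∏ f vᵢ > m` of them, hence one differs from all `m` lists on `B`.
-/

open Finset Function

section ListSelection

variable {ι κ α : Type*} [Fintype ι] [DecidableEq ι] {A : ι → Finset α}

lemma injOn_image_univ_piFinset [DecidableEq α] (hA : Pairwise (Disjoint on A)) :
    Set.InjOn (fun c : ι → α => univ.image c) (Fintype.piFinset A) := by
  intro c hc c' hc' (h : univ.image c = univ.image c')
  simp only [mem_coe, Fintype.mem_piFinset] at hc hc'
  funext i
  obtain ⟨k, -, hk⟩ := mem_image.mp (h ▸ mem_image_of_mem c' (mem_univ i))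
  by_contra hne
  have hki : k ≠ i := by rintro rfl; exact hne hk
  exact disjoint_left.mp (hA hki) (hc k) (hk ▸ hc' i)

lemma exists_mem_piFinset_not_injective (hA : ¬ Pairwise (Disjoint on A))
    (hne : (Fintype.piFinset A).Nonempty) :
    ∃ c ∈ Fintype.piFinset A, ¬ Injective c := by
  obtain ⟨i, k, hik, hdisj⟩ : ∃ i k, i ≠ k ∧ ¬ Disjoint (A i) (A k) := by
    simpa [Pairwise] using hA
  obtain ⟨x, hxi, hxk⟩ := not_disjoint_iff.mp hdisj
  obtain ⟨c₀, hc₀⟩ := hne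
  rw [Fintype.mem_piFinset] at hc₀
  refine ⟨update (update c₀ i x) k x, ?_, fun hinj => hik (hinj ?_)⟩
  · rw [Fintype.mem_piFinset]
    intro j
    by_cases hjk : j = k
    · subst hjk; simpa using hxk
    by_cases hji : j = i
    · subst hji; simpa [hjk] using hxi
    · simpa [hjk, hji] using hc₀ j
  · simp [hik]

lemma exists_mem_piFinset_forall_image_ne [DecidableEq α] [Fintype κ] (B : κ → Finset α)
    (hcard : Fintype.card κ < ∏ i, (A i).card) (hB : ∀ j, (B j).card = Fintype.card ι) :
    ∃ c ∈ Fintype.piFinset A, ∀ j, univ.image c ≠ B j := by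
  by_cases hA : Pairwise (Disjoint on A)
  · have hlt : (univ.image B).card < ((Fintype.piFinset A).image fun c => univ.image c).card :=
      calc (univ.image B).card ≤ Fintype.card κ := card_image_le
        _ < ∏ i, (A i).card := hcard
        _ = _ := by rw [card_image_of_injOn (injOn_image_univ_piFinset hA), Fintype.card_piFinset]
    obtain ⟨_, hS, hSB⟩ := exists_mem_notMem_of_card_lt_card hlt
    obtain ⟨c, hc, rfl⟩ := mem_image.mp hS
    exact ⟨c, hc, fun j hj => hSB (hj ▸ mem_image_of_mem B (mem_univ j))⟩
  · have hne : (Fintype.piFinset A).Nonempty := by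
      rw [← card_pos, Fintype.card_piFinset]
      omega
    obtain ⟨c, hc, hinj⟩ := exists_mem_piFinset_not_injective hA hne
    have hlt : (univ.image c).card < Fintype.card ι :=
      lt_of_le_of_ne card_image_le fun h =>
        hinj (by simpa using card_image_iff.mp (h.trans card_univ.symm))
    exact ⟨c, hc, fun j hj => by rw [hj, hB j] at hlt; exact lt_irrefl _ hlt⟩

lemma exists_mem_piFinset_forall_not_subset_image [DecidableEq α] [Fintype κ] (B : κ → Finset α)
    (hcard : Fintype.card κ < ∏ i, (A i).card) (hB : ∀ j, (B j).card = Fintype.card ι) :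
    ∃ c ∈ Fintype.piFinset A, ∀ j, ¬ B j ⊆ univ.image c := by
  obtain ⟨c, hc, hcB⟩ := exists_mem_piFinset_forall_image_ne B hcard hB
  refine ⟨c, hc, fun j hsub => hcB j (eq_of_subset_of_card_le hsub ?_).symm⟩
  rw [hB j]
  exact card_image_le.trans_eq card_univ

end ListSelection

lemma choosable_completeBipartiteGraph_of_forall {V W : Type*} [Fintype V] (f : V ⊕ W → ℕ)
    (h : ∀ L : V ⊕ W → Finset ℕ, (∀ v, (L v).card = f v) →
      ∃ c : V → ℕ, (∀ v, c v ∈ L (.inl v)) ∧ ∀ w, ¬ L (.inr w) ⊆ univ.image c) :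
    Choosable (completeBipartiteGraph V W) f := by
  intro L hL
  obtain ⟨c, hc, hcW⟩ := h L hL
  choose b hbL hbc using fun w => not_subset.mp (hcW w)
  refine ⟨Sum.elim c b, Sum.rec hc hbL, ?_⟩
  rintro (v | w) (v' | w') hadj
  · simp at hadj
  · exact fun (h : c v = b w') => hbc w' (h ▸ mem_image_of_mem c (mem_univ v))
  · exact fun (h : b w = c v') => hbc w (h ▸ mem_image_of_mem c (mem_univ v'))
  · simp at hadj

theorem stmt_8_general (n m : ℕ) (f : Fin n → ℕ)
    (hm : m < ∏ i, f i) :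
    Choosable (completeBipartiteGraph (Fin n) (Fin m))
      (Sum.elim f fun _ => n) := by
  refine choosable_completeBipartiteGraph_of_forall _ fun L hL => ?_
  obtain ⟨c, hc, hcB⟩ := exists_mem_piFinset_forall_not_subset_image
    (A := fun i => L (.inl i)) (fun j => L (.inr j)) (by simpa [hL] using hm) (by simp [hL])
  exact ⟨c, Fintype.mem_piFinset.mp hc, hcB⟩

/-- If `K_{n,m}` has parts `A = {v_1,…,v_n}` and `B` of size `m`, each `v_i` has list size
`f v_i > 0`, each vertex of `B` has list size `n`, and `m < ∏ f v_i`, then `K_{n,m}` is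
`f`-choosable. -/
theorem stmt_8 (n m : ℕ) (f : Fin n → ℕ) (hf : ∀ i, 0 < f i)
    (hm : m < ∏ i, f i) :
    Choosable (completeBipartiteGraph (Fin n) (Fin m))
      (Sum.elim f fun _ => n) :=
  stmt_8_general n m f hm
end

section
/- Let G be a graph, f : V(G) → ℕ, and L an f-list assignment such that every proper L-colouring of G is injective (uses |V(G)| distinct colours). Let Φ(G,L) = { φ(V(G)) : φ is a proper L-colouring of G } be the set of colour sets used by proper L-colourings. If m < |Φ(G,L)|, then for every extension L' of L to G ⊕ K̄_m (with each new vertex receiving a list of size |V(G)|), G ⊕ K̄_m has a proper L'-colouring; and if m = |Φ(G,L)|, then there exists an extension L' of L to G ⊕ K̄_m such that G ⊕ K̄_m has no proper L'-colouring. -/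
/-- The join `G ⊕ K̄_m` of a graph `G` with the edgeless graph on `m` vertices. -/
def joinK {V : Type*} (G : SimpleGraph V) (m : ℕ) : SimpleGraph (V ⊕ Fin m) where
  Adj a b :=
    match a, b with
    | Sum.inl u, Sum.inl v => G.Adj u v
    | Sum.inl _, Sum.inr _ => True
    | Sum.inr _, Sum.inl _ => True
    | Sum.inr _, Sum.inr _ => False
  symm := ⟨by
    rintro (u | i) (v | j) h
    · exact G.adj_symm h
    · trivial
    · trivial
    · exact h⟩
  loopless := ⟨by
    rintro (u | i) h
    · exact G.irrefl h
    · exact h⟩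

/-- `Φ(G, L)`: the set of colour sets `φ(V(G))` used by proper `L`-colourings of `G`. -/
def PhiSet {V : Type*} [Fintype V] (G : SimpleGraph V) (L : V → Finset ℕ) :
    Set (Finset ℕ) :=
  {S | ∃ φ : V → ℕ, (∀ v, φ v ∈ L v) ∧ (∀ ⦃u v⦄, G.Adj u v → φ u ≠ φ v) ∧
    Finset.univ.image φ = S}

/-!
A proper `L'`-colouring of `G ⊕ K̄_m` is a proper `L`-colouring `φ` of `G` such that no new list
`L'(u)` is contained in `φ(V(G))`. If `m < |Φ(G,L)|`, some `S = φ(V(G)) ∈ Φ(G,L)` is not among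
the `m` new lists, and since `|L'(u)| = |V(G)| ≥ |S|`, no new list is contained in `S`.
If `m = |Φ(G,L)|`, give the new vertices exactly the sets of `Φ(G,L)` as lists (they have size
`|V(G)|` because proper colourings are injective); then every proper `L`-colouring `φ` of `G`
fails at the new vertex whose list is `φ(V(G))`.
-/

theorem Set.exists_mem_forall_ne_of_lt_ncard {β : Type*} {s : Set β} {m : ℕ} (F : Fin m → β)
    (h : m < s.ncard) : ∃ x ∈ s, ∀ j, F j ≠ x := by
  have hrange : (Set.range F).ncard < s.ncard := by
    rw [← Nat.card_coe_set_eq]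
    exact (Finite.card_range_le F).trans_lt (by simpa using h)
  obtain ⟨x, hxs, hxF⟩ := Set.exists_mem_notMem_of_ncard_lt_ncard hrange
  exact ⟨x, hxs, fun j hj ↦ hxF ⟨j, hj⟩⟩

section ListColouring

open Finset

variable {V α : Type*}

def IsListColouring (G : SimpleGraph V) (L : V → Finset α) (φ : V → α) : Prop :=
  (∀ v, φ v ∈ L v) ∧ ∀ ⦃u v⦄, G.Adj u v → φ u ≠ φ v

section joinK

variable (G : SimpleGraph V) {m : ℕ}

theorem joinK_adj_inl_inl {u v : V} : (joinK G m).Adj (.inl u) (.inl v) ↔ G.Adj u v := Iff.rfl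

theorem joinK_adj_inl_inr (v : V) (j : Fin m) : (joinK G m).Adj (.inl v) (.inr j) := trivial

theorem not_joinK_adj_inr_inr (i j : Fin m) : ¬(joinK G m).Adj (.inr i) (.inr j) := id

variable {G}

theorem isListColouring_joinK_iff {L' : V ⊕ Fin m → Finset α} {c : V ⊕ Fin m → α} :
    IsListColouring (joinK G m) L' c ↔
      IsListColouring G (L' ∘ .inl) (c ∘ .inl) ∧
        ∀ j, c (.inr j) ∈ L' (.inr j) ∧ ∀ v, c (.inl v) ≠ c (.inr j) := by
  constructor
  · rintro ⟨hmem, hadj⟩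
    exact ⟨⟨fun v ↦ hmem _, fun u v h ↦ hadj ((joinK_adj_inl_inl G).2 h)⟩,
      fun j ↦ ⟨hmem _, fun v ↦ hadj (joinK_adj_inl_inr G v j)⟩⟩
  · rintro ⟨⟨hmem, hadj⟩, hnew⟩
    refine ⟨fun | .inl v => hmem v | .inr j => (hnew j).1, ?_⟩
    rintro (u | i) (v | j) h
    · exact hadj h
    · exact (hnew j).2 u
    · exact ((hnew i).2 v).symm
    · exact absurd h (not_joinK_adj_inr_inr G i j)

theorem exists_isListColouring_joinK_iff [Fintype V] [DecidableEq α]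
    {L' : V ⊕ Fin m → Finset α} :
    (∃ c, IsListColouring (joinK G m) L' c) ↔
      ∃ φ, IsListColouring G (L' ∘ .inl) φ ∧ ∀ j, ¬L' (.inr j) ⊆ univ.image φ := by
  constructor
  · rintro ⟨c, hc⟩
    obtain ⟨hφ, hnew⟩ := isListColouring_joinK_iff.1 hc
    refine ⟨c ∘ .inl, hφ, fun j hsub ↦ ?_⟩
    obtain ⟨v, -, hv⟩ := mem_image.1 (hsub (hnew j).1)
    exact (hnew j).2 v hv
  · rintro ⟨φ, hφ, hnew⟩
    choose x hxL hxφ using fun j ↦ not_subset.1 (hnew j)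
    refine ⟨Sum.elim φ x, isListColouring_joinK_iff.2 ⟨hφ, fun j ↦ ⟨hxL j, fun v hv ↦ ?_⟩⟩⟩
    exact hxφ j (mem_image.2 ⟨v, mem_univ v, hv⟩)

end joinK

section PhiSet

variable [Fintype V] {G : SimpleGraph V} {L : V → Finset ℕ}

theorem mem_phiSet {S : Finset ℕ} :
    S ∈ PhiSet G L ↔ ∃ φ, IsListColouring G L φ ∧ univ.image φ = S := by
  simp only [PhiSet, IsListColouring, Set.mem_ofPred_eq, and_assoc]

theorem phiSet_finite : (PhiSet G L).Finite := by
  classical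
  refine (univ.biUnion L).powerset.finite_toSet.subset ?_
  rintro _ ⟨φ, hφ, -, rfl⟩
  simp only [coe_powerset, Set.mem_preimage, Set.mem_powerset_iff, coe_subset]
  intro x hx
  obtain ⟨v, -, rfl⟩ := mem_image.1 hx
  exact mem_biUnion.2 ⟨v, mem_univ v, hφ v⟩

theorem card_of_mem_phiSet
    (hinj : ∀ φ, IsListColouring G L φ → Function.Injective φ) {S : Finset ℕ}
    (hS : S ∈ PhiSet G L) : S.card = Fintype.card V := by
  obtain ⟨φ, hφ, rfl⟩ := mem_phiSet.1 hS
  rw [card_image_of_injective _ (hinj φ hφ), card_univ]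

end PhiSet

end ListColouring

theorem stmt_10_general {V : Type*} [Fintype V] (G : SimpleGraph V)
    (L : V → Finset ℕ)
    (hinj : ∀ φ : V → ℕ, (∀ v, φ v ∈ L v) → (∀ ⦃u v⦄, G.Adj u v → φ u ≠ φ v) →
      Function.Injective φ) :
    (∀ m, m < Set.ncard (PhiSet G L) →
      ∀ L' : V ⊕ Fin m → Finset ℕ,
        (∀ v, L' (Sum.inl v) = L v) →
        (∀ j, (L' (Sum.inr j)).card = Fintype.card V) →
        ∃ c : V ⊕ Fin m → ℕ, (∀ a, c a ∈ L' a) ∧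
          ∀ ⦃a b⦄, (joinK G m).Adj a b → c a ≠ c b) ∧
    (∀ m, m = Set.ncard (PhiSet G L) →
      ∃ L' : V ⊕ Fin m → Finset ℕ,
        (∀ v, L' (Sum.inl v) = L v) ∧
        (∀ j, (L' (Sum.inr j)).card = Fintype.card V) ∧
        ¬ ∃ c : V ⊕ Fin m → ℕ, (∀ a, c a ∈ L' a) ∧
          ∀ ⦃a b⦄, (joinK G m).Adj a b → c a ≠ c b) := by
  constructor
  · intro m hm L' hL'old hL'new
    obtain ⟨S, hS, hSnew⟩ := Set.exists_mem_forall_ne_of_lt_ncard (L' ∘ .inr) hm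
    obtain ⟨φ, hφ, rfl⟩ := mem_phiSet.1 hS
    have hφ' : IsListColouring G (L' ∘ .inl) φ := (funext hL'old : L' ∘ .inl = L) ▸ hφ
    have hnew : ∀ j, ¬L' (.inr j) ⊆ Finset.univ.image φ := fun j hsub ↦
      hSnew j <| Finset.eq_of_subset_of_card_le hsub
        ((Finset.card_image_le.trans_eq Finset.card_univ).trans_eq (hL'new j).symm)
    exact exists_isListColouring_joinK_iff.2 ⟨φ, hφ', hnew⟩
  · rintro m rfl
    have := phiSet_finite (G := G) (L := L) |>.to_subtype
    let e := Finite.equivFinOfCardEq (Nat.card_coe_set_eq (PhiSet G L))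
    refine ⟨Sum.elim L fun j ↦ e.symm j, fun _ ↦ rfl,
      fun j ↦ card_of_mem_phiSet (fun φ hφ ↦ hinj φ hφ.1 hφ.2) (e.symm j).2, ?_⟩
    intro hc
    obtain ⟨φ, hφ, hnew⟩ := exists_isListColouring_joinK_iff.1 hc
    have hS : Finset.univ.image φ ∈ PhiSet G L := mem_phiSet.2 ⟨φ, hφ, rfl⟩
    exact hnew (e ⟨_, hS⟩) (by simp)

/-- Suppose every proper `L`-colouring of `G` is injective. If `m < |Φ(G,L)|` then every
extension of `L` to `G ⊕ K̄_m` (each new vertex getting a list of size `|V(G)|`) admits a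
proper colouring; and if `m = |Φ(G,L)|` then some extension admits no proper colouring. -/
theorem stmt_10 {V : Type*} [Fintype V] (G : SimpleGraph V) (f : V → ℕ)
    (L : V → Finset ℕ) (hL : ∀ v, (L v).card = f v)
    (hinj : ∀ φ : V → ℕ, (∀ v, φ v ∈ L v) → (∀ ⦃u v⦄, G.Adj u v → φ u ≠ φ v) →
      Function.Injective φ) :
    (∀ m, m < Set.ncard (PhiSet G L) →
      ∀ L' : V ⊕ Fin m → Finset ℕ,
        (∀ v, L' (Sum.inl v) = L v) →
        (∀ j, (L' (Sum.inr j)).card = Fintype.card V) →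
        ∃ c : V ⊕ Fin m → ℕ, (∀ a, c a ∈ L' a) ∧
          ∀ ⦃a b⦄, (joinK G m).Adj a b → c a ≠ c b) ∧
    (∀ m, m = Set.ncard (PhiSet G L) →
      ∃ L' : V ⊕ Fin m → Finset ℕ,
        (∀ v, L' (Sum.inl v) = L v) ∧
        (∀ j, (L' (Sum.inr j)).card = Fintype.card V) ∧
        ¬ ∃ c : V ⊕ Fin m → ℕ, (∀ a, c a ∈ L' a) ∧
          ∀ ⦃a b⦄, (joinK G m).Adj a b → c a ≠ c b) :=
  stmt_10_general G L hinj
end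

section
/- Let K_n have vertices v_1,...,v_n with f(v_1) ≤ ... ≤ f(v_n), let M ⊆ {v_1,...,v_n} be nonempty, and let i be the smallest index with v_i ∈ M. Let δ_M be the characteristic function of M. Writing x(g) for the vector whose j-th entry is g(u_j) − j when the vertices are listed in nondecreasing order of g, we have (after keeping the original vertex order, which remains valid): x((f − δ_M)|_{K_n}) ≥ x(f) → i componentwise, and x((f − δ_M)|_{K_n − v_i}) ≥ x(f) ↑ i componentwise, where x → i = (x_1,...,x_{i-1}, x_i − 1, ..., x_n − 1) and x ↑ i = (x_1,...,x_{i-1}, x_{i+1},...,x_n). -/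
/-- Let `f` (defined on indices `1, …, n`) satisfy `f 1 ≤ … ≤ f n`, let `M` be a nonempty
set of indices in `{1, …, n}`, let `i` be the smallest index in `M`, and let `δ` be the
characteristic function of `M`. Then, with `x(f)_j = f j − j`:
componentwise `x(f − δ_M) ≥ x(f) → i` on `K_n`, and
`x((f − δ_M)|_{K_n − v_i}) ≥ x(f) ↑ i` on `K_n − v_i`, where
`x → i = (x_1, …, x_{i-1}, x_i − 1, …, x_n − 1)` and
`x ↑ i = (x_1, …, x_{i-1}, x_{i+1}, …, x_n)`. -/
theorem stmt_15 (n : ℕ) (f : ℕ → ℤ)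
    (hmono : ∀ j, 1 ≤ j → j < n → f j ≤ f (j + 1))
    (M : Finset ℕ) (hM : M ⊆ Finset.Icc 1 n) (hne : M.Nonempty) :
    let i := M.min' hne
    let δ : ℕ → ℤ := fun j => if j ∈ M then 1 else 0
    (∀ j, 1 ≤ j → j ≤ n →
        (if j < i then f j - j else f j - j - 1) ≤ f j - δ j - j) ∧
      (∀ j, 1 ≤ j → j ≤ n - 1 →
        (if j < i then f j - j else f (j + 1) - (j + 1)) ≤
          (if j < i then f j - δ j - j else f (j + 1) - δ (j + 1) - j)) := by
  intro i δ
  have hδ0 : ∀ j, j < i → δ j = 0 := by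
    intro j hj
    simp only [δ, ite_eq_right_iff]
    intro hjM
    exact absurd (M.min'_le j hjM) (by omega)
  have hδ1 : ∀ j, δ j ≤ 1 := by
    intro j; simp only [δ]; split <;> norm_num
  refine ⟨fun j h1 h2 => ?_, fun j h1 h2 => ?_⟩
  · by_cases h : j < i
    · rw [if_pos h, hδ0 j h]; omega
    · rw [if_neg h]; have := hδ1 j; omega
  · by_cases h : j < i
    · rw [if_pos h, if_pos h, hδ0 j h]; omega
    · rw [if_neg h, if_neg h]; have := hδ1 (j+1); omega
end

section
/- Let x = (x_1,...,x_n) be a vector of nonnegative integers in reduced form (x_1 ≤ x_2 ≤ ... ≤ x_n). Define the n × n matrix A by A_{ij} = binomial(x_i + 1, j − i + 1) when 0 ≤ j − i + 1 ≤ x_i + 1, and A_{ij} = 0 when j − i + 1 < 0 or j − i + 1 > x_i + 1. Then ψ(x) = det(A), where ψ(x) is the number of x-dominated monotone lattice paths from (0,0) to (x_n, n). -/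
-- finiteness
lemma dom_finite (n : ℕ) (x : ℕ → ℕ) : {s : List Bool | Dominated n x s}.Finite := by
  apply Set.Finite.subset (List.finite_length_eq Bool (n + x n))
  rintro s ⟨h1, h2, -⟩
  have := List.count_true_add_count_false s
  simp only [Set.mem_setOf_eq]
  omega

lemma psi_zero (x : ℕ → ℕ) : psi 0 x = 1 := by
  have : {s : List Bool | Dominated 0 x s} = {List.replicate (x 0) false} := by
    ext s
    simp only [Set.mem_setOf_eq, Dominated, Set.mem_singleton_iff]
    constructor
    · rintro ⟨h1, h2, -⟩
      rw [List.eq_replicate_iff]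
      have := List.count_true_add_count_false s
      constructor
      · omega
      · intro b hb
        cases b
        · rfl
        · exfalso
          have := List.count_pos_iff.2 hb
          omega
    · rintro rfl
      refine ⟨?_, ?_, ?_⟩
      · rw [List.count_replicate]; rfl
      · rw [List.count_replicate]; rfl
      · intro k hk; omega
  rw [psi, this, Set.ncard_singleton]

lemma dom_cons_true (n : ℕ) (x : ℕ → ℕ) (t : List Bool) :
    Dominated (n+1) x (true :: t) ↔ Dominated n (fun i => x (i+1)) t := by
  unfold Dominated
  constructor
  · rintro ⟨h1, h2, h3⟩
    refine ⟨?_, ?_, ?_⟩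
    · simp at h1; omega
    · simpa using h2
    · intro k hk
      have h := h3 (k+1)
      simp only [List.take_succ_cons] at h
      simp at h ⊢
      have := h (by omega)
      omega
  · rintro ⟨h1, h2, h3⟩
    refine ⟨?_, ?_, ?_⟩
    · simp; omega
    · simpa using h2
    · intro k hk
      match k with
      | 0 => simp
      | k+1 =>
        simp only [List.take_succ_cons] at hk ⊢
        simp at hk ⊢
        have := h3 k (by omega)
        simp at this
        omega

lemma dom_cons_false (n : ℕ) (x : ℕ → ℕ) (t : List Bool)
    (hx : ∀ i, 1 ≤ i → i ≤ n+1 → 1 ≤ x i) :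
    Dominated (n+1) x (false :: t) ↔ Dominated (n+1) (fun i => x i - 1) t := by
  have hxn : 1 ≤ x (n+1) := hx (n+1) (by omega) (by omega)
  unfold Dominated
  constructor
  · rintro ⟨h1, h2, h3⟩
    refine ⟨?_, ?_, ?_⟩
    · simpa using h1
    · simp at h2 ⊢; omega
    · intro k hk
      have h := h3 (k+1)
      simp only [List.take_succ_cons] at h
      simp at h ⊢
      have h := h (by omega)
      have hpos : 1 ≤ x ((t.take k).count true + 1) := hx _ (by omega) (by omega)
      omega
  · rintro ⟨h1, h2, h3⟩
    refine ⟨?_, ?_, ?_⟩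
    · simpa using h1
    · simp at h2 ⊢; omega
    · intro k hk
      match k with
      | 0 => simp
      | k+1 =>
        simp only [List.take_succ_cons] at hk ⊢
        simp at hk ⊢
        have h := h3 k (by omega)
        simp at h
        have hpos : 1 ≤ x ((t.take k).count true + 1) := hx _ (by omega) (by omega)
        omega

lemma not_dom_nil (n : ℕ) (x : ℕ → ℕ) : ¬ Dominated (n+1) x [] := by
  rintro ⟨h1, -, -⟩
  simp at h1

lemma not_dom_cons_false (n : ℕ) (x : ℕ → ℕ) (t : List Bool) (hx : x 1 = 0) :
    ¬ Dominated (n+1) x (false :: t) := by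
  rintro ⟨h1, h2, h3⟩
  have := h3 1
  simp [hx] at this

lemma psi_succ_zero (n : ℕ) (x : ℕ → ℕ) (hx : x 1 = 0) :
    psi (n+1) x = psi n (fun i => x (i+1)) := by
  have hset : {s : List Bool | Dominated (n+1) x s}
      = (List.cons true) '' {s : List Bool | Dominated n (fun i => x (i+1)) s} := by
    ext s
    simp only [Set.mem_setOf_eq, Set.mem_image]
    constructor
    · intro h
      match s with
      | [] => exact absurd h (not_dom_nil n x)
      | true :: t => exact ⟨t, (dom_cons_true n x t).1 h, rfl⟩
      | false :: t => exact absurd h (not_dom_cons_false n x t hx)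
    · rintro ⟨t, ht, rfl⟩
      exact (dom_cons_true n x t).2 ht
  rw [psi, psi, hset, Set.ncard_image_of_injective _ (fun a b h => by injection h)]

lemma psi_succ_pos (n : ℕ) (x : ℕ → ℕ) (hx : ∀ i, 1 ≤ i → i ≤ n+1 → 1 ≤ x i) :
    psi (n+1) x = psi n (fun i => x (i+1)) + psi (n+1) (fun i => x i - 1) := by
  have hset : {s : List Bool | Dominated (n+1) x s}
      = (List.cons true) '' {s : List Bool | Dominated n (fun i => x (i+1)) s}
        ∪ (List.cons false) '' {s : List Bool | Dominated (n+1) (fun i => x i - 1) s} := by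
    ext s
    simp only [Set.mem_setOf_eq, Set.mem_union, Set.mem_image]
    constructor
    · intro h
      match s with
      | [] => exact absurd h (not_dom_nil n x)
      | true :: t => exact Or.inl ⟨t, (dom_cons_true n x t).1 h, rfl⟩
      | false :: t => exact Or.inr ⟨t, (dom_cons_false n x t hx).1 h, rfl⟩
    · rintro (⟨t, ht, rfl⟩ | ⟨t, ht, rfl⟩)
      · exact (dom_cons_true n x t).2 ht
      · exact (dom_cons_false n x t hx).2 ht
  have hdisj : Disjoint ((List.cons true) '' {s : List Bool | Dominated n (fun i => x (i+1)) s})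
      ((List.cons false) '' {s : List Bool | Dominated (n+1) (fun i => x i - 1) s}) := by
    rw [Set.disjoint_left]
    rintro s ⟨t, -, rfl⟩ ⟨u, -, h⟩
    injection h with hb
    exact absurd hb (by decide)
  rw [psi, psi, psi, hset,
    Set.ncard_union_eq hdisj ((dom_finite n _).image _) ((dom_finite (n+1) _).image _),
    Set.ncard_image_of_injective _ (fun a b h => by injection h),
    Set.ncard_image_of_injective _ (fun a b h => by injection h)]

def mat (n : ℕ) (x : ℕ → ℕ) : Matrix (Fin n) (Fin n) ℤ :=
  Matrix.of fun i j : Fin n =>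
    if (i : ℕ) ≤ (j : ℕ) + 1 then
      ((x ((i : ℕ) + 1) + 1).choose ((j : ℕ) + 1 - (i : ℕ)) : ℤ)
    else 0

lemma submatrix_mat (n : ℕ) (x : ℕ → ℕ) :
    (mat (n+1) x).submatrix Fin.succ Fin.succ = mat n (fun i => x (i+1)) := by
  ext i j
  simp only [Matrix.submatrix_apply, mat, Matrix.of_apply, Fin.val_succ]
  rw [show (j : ℕ) + 1 + 1 - ((i : ℕ) + 1) = (j : ℕ) + 1 - (i : ℕ) by omega]
  by_cases h : (i : ℕ) ≤ (j : ℕ) + 1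
  · rw [if_pos (by omega), if_pos h]
  · rw [if_neg (by omega), if_neg h]

lemma row_zero_mat (n : ℕ) (x : ℕ → ℕ) (hx : x 1 = 0) (j : Fin (n+1)) :
    mat (n+1) x 0 j = if j = 0 then 1 else 0 := by
  simp only [mat, Matrix.of_apply, Fin.val_zero, Nat.zero_le, if_pos, zero_add, hx]
  rcases eq_or_ne j 0 with rfl | h
  · simp
  · have hj : (j : ℕ) ≠ 0 := fun hh => h (Fin.ext hh)
    rw [if_neg h, Nat.choose_eq_zero_of_lt (by omega), Int.natCast_zero]

lemma det_mat_zero (n : ℕ) (x : ℕ → ℕ) (hx : x 1 = 0) :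
    (mat (n+1) x).det = (mat n (fun i => x (i+1))).det := by
  rw [Matrix.det_succ_row_zero]
  rw [Finset.sum_eq_single 0]
  · rw [row_zero_mat n x hx 0, if_pos rfl]
    simp [Fin.succAbove_zero, submatrix_mat n x]
  · intro j _ hj
    rw [row_zero_mat n x hx j, if_neg hj]
    ring
  · intro h
    exact absurd (Finset.mem_univ 0) h

lemma det_mat_pos (n : ℕ) (x : ℕ → ℕ) (hx : ∀ i, 1 ≤ i → i ≤ n+1 → 1 ≤ x i) :
    (mat (n+1) x).det
      = (mat n (fun i => x (i+1))).det + (mat (n+1) (fun i => x i - 1)).det := by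
  set B : Matrix (Fin (n+1)) (Fin (n+1)) ℤ := mat (n+1) (fun i => x i - 1) with hBdef
  have hB : ∀ i j : Fin (n+1), B i j =
      if (i : ℕ) ≤ (j : ℕ) + 1 then ((x ((i:ℕ)+1)).choose ((j:ℕ)+1-(i:ℕ)) : ℤ) else 0 := by
    intro i j
    have h1 : x ((i:ℕ)+1) - 1 + 1 = x ((i:ℕ)+1) := by
      have := hx ((i:ℕ)+1) (by omega) (by omega)
      omega
    simp only [hBdef, mat, Matrix.of_apply, h1]
  set N : Matrix (Fin (n+1)) (Fin (n+1)) ℤ :=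
    Matrix.of (fun i j : Fin (n+1) => if (i:ℕ)+1 = (j:ℕ) then 1 else 0) with hNdef
  have hBN : ∀ i j : Fin (n+1), (B * N) i j =
      if h : 1 ≤ (j : ℕ) then B i ⟨(j:ℕ)-1, by omega⟩ else 0 := by
    intro i j
    rw [Matrix.mul_apply]
    by_cases h : 1 ≤ (j : ℕ)
    · rw [dif_pos h]
      rw [Finset.sum_eq_single (⟨(j:ℕ)-1, by omega⟩ : Fin (n+1))]
      · rw [hNdef]
        simp only [Matrix.of_apply]
        rw [if_pos (by omega), mul_one]
      · intro k _ hk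
        rw [hNdef]
        simp only [Matrix.of_apply]
        rw [if_neg, mul_zero]
        intro hkj
        exact hk (Fin.ext (show (k:ℕ) = (j:ℕ)-1 by omega))
      · intro h'; exact absurd (Finset.mem_univ _) h'
    · rw [dif_neg h]
      apply Finset.sum_eq_zero
      intro k _
      rw [hNdef]
      simp only [Matrix.of_apply]
      rw [if_neg (by omega), mul_zero]
  set C : Matrix (Fin (n+1)) (Fin (n+1)) ℤ := B + B * N with hCdef
  have key : mat (n+1) x =
      C.updateCol 0 ((fun i => C i 0) + (fun i => if i = 0 then 1 else 0)) := by
    ext i j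
    rw [Matrix.updateCol_apply]
    by_cases hj : j = 0
    · subst hj
      rw [if_pos rfl]
      simp only [Pi.add_apply]
      rw [hCdef]
      simp only [Matrix.add_apply]
      rw [hBN, dif_neg (by simp), hB]
      simp only [mat, Matrix.of_apply, Fin.val_zero, zero_add]
      rcases Nat.lt_or_ge (i : ℕ) 2 with hi | hi
      · rcases Nat.lt_or_ge (i : ℕ) 1 with hi0 | hi0
        · have h0 : (i : ℕ) = 0 := by omega
          have hieq : i = 0 := Fin.ext (by simp [h0])
          rw [if_pos hieq, if_pos (by omega), if_pos (by omega), h0]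
          norm_num [Nat.choose_one_right]
        · have h1 : (i : ℕ) = 1 := by omega
          have hine : i ≠ 0 := by intro hh; rw [hh] at h1; simp at h1
          rw [if_neg hine, if_pos (by omega), if_pos (by omega), h1]
          norm_num
      · have hine : i ≠ 0 := by intro hh; rw [hh] at hi; simp at hi
        rw [if_neg hine, if_neg (by omega), if_neg (by omega)]
        norm_num
    · rw [if_neg hj]
      have hj1 : 1 ≤ (j : ℕ) := by
        rcases Nat.eq_zero_or_pos (j : ℕ) with h | h
        · exact absurd (Fin.ext h) hj
        · omega
      rw [hCdef]
      simp only [Matrix.add_apply]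
      rw [hBN, dif_pos hj1, hB, hB]
      simp only [mat, Matrix.of_apply]
      rcases Nat.lt_or_ge ((j:ℕ)+1) (i:ℕ) with hij | hij
      · rw [if_neg (by omega), if_neg (by omega), if_neg (by omega)]
        norm_num
      · rcases eq_or_lt_of_le hij with hij2 | hij2
        · -- i = j+1
          rw [if_pos (by omega), if_pos (by omega), if_neg (by omega)]
          rw [← hij2]
          simp [Nat.sub_self]
        · -- i ≤ j
          have hij3 : (i : ℕ) ≤ (j : ℕ) := by omega
          rw [if_pos (by omega), if_pos (by omega), if_pos (by omega)]
          have hsub : (j:ℕ) + 1 - (i:ℕ) = ((j:ℕ) - (i:ℕ)) + 1 := by omega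
          have hsub2 : ((j:ℕ) - 1) + 1 - (i:ℕ) = (j:ℕ) - (i:ℕ) := by omega
          rw [hsub, hsub2, Nat.choose_succ_succ]
          push_cast
          ring
  -- determinant of U = 1 + N is 1 implicitly via C = B * (1 + N)
  have hCB : C = B * (1 + N) := by
    rw [hCdef, Matrix.mul_add, Matrix.mul_one]
  have hNtri : (1 + N : Matrix (Fin (n+1)) (Fin (n+1)) ℤ).BlockTriangular id := by
    intro i j hij
    simp only [Matrix.add_apply, Matrix.one_apply, hNdef, Matrix.of_apply]
    have : (j : ℕ) < (i : ℕ) := hij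
    rw [if_neg (by intro h; subst h; omega), if_neg (by omega)]
    norm_num
  have hdetU : (1 + N : Matrix (Fin (n+1)) (Fin (n+1)) ℤ).det = 1 := by
    rw [Matrix.det_of_upperTriangular hNtri]
    apply Finset.prod_eq_one
    intro i _
    simp only [Matrix.add_apply, Matrix.one_apply_eq, hNdef, Matrix.of_apply]
    rw [if_neg (by omega)]
    norm_num
  have hdetC : C.det = B.det := by
    rw [hCB, Matrix.det_mul, hdetU, mul_one]
  -- second piece: det of C with column 0 replaced by e_0
  have hsub : (C.updateCol 0 (fun i => if i = 0 then 1 else 0)).det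
      = (mat n (fun i => x (i+1))).det := by
    rw [Matrix.det_succ_column_zero]
    rw [Finset.sum_eq_single 0]
    · rw [Matrix.updateCol_self, if_pos rfl]
      have hmat : (C.updateCol 0 (fun i => if i = 0 then 1 else 0)).submatrix
          (Fin.succAbove 0) Fin.succ = mat n (fun i => x (i+1)) := by
        rw [Fin.succAbove_zero, ← submatrix_mat n x]
        ext i j
        simp only [Matrix.submatrix_apply]
        rw [Matrix.updateCol_ne (Fin.succ_ne_zero j), key,
          Matrix.updateCol_ne (Fin.succ_ne_zero j)]
      rw [hmat]
      simp
    · intro i _ hi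
      rw [Matrix.updateCol_self, if_neg hi]
      ring
    · intro h
      exact absurd (Finset.mem_univ _) h
  have hfinal : (mat (n+1) x).det
      = C.det + (C.updateCol 0 (fun i => if i = 0 then 1 else 0)).det := by
    rw [key, Matrix.det_updateCol_add, Matrix.updateCol_eq_self]
  rw [hfinal, hdetC, hsub, hBdef, add_comm]

lemma red_mono (n : ℕ) (x : ℕ → ℕ) (hred : ∀ i, 1 ≤ i → i < n → x i ≤ x (i + 1)) :
    ∀ j, 1 ≤ j → j ≤ n → x 1 ≤ x j := by
  intro j h1 h2
  induction j with
  | zero => omega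
  | succ m ih =>
    rcases Nat.eq_zero_or_pos m with rfl | hm
    · exact le_rfl
    · exact le_trans (ih (by omega) (by omega)) (hred m (by omega) (by omega))

lemma main_aux : ∀ N n (x : ℕ → ℕ),
    n + (∑ i ∈ Finset.range n, x (i+1)) ≤ N →
    (∀ i, 1 ≤ i → i < n → x i ≤ x (i + 1)) →
    (psi n x : ℤ) = (mat n x).det := by
  intro N
  induction N with
  | zero =>
    intro n x hN _
    have hn : n = 0 := by omega
    subst hn
    rw [psi_zero, Matrix.det_fin_zero]
    norm_num
  | succ N ih =>
    intro n x hN hred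
    match n with
    | 0 =>
      rw [psi_zero, Matrix.det_fin_zero]
      norm_num
    | m+1 =>
      have hsum : ∑ i ∈ Finset.range (m+1), x (i+1)
          = (∑ i ∈ Finset.range m, x (i+1+1)) + x 1 := Finset.sum_range_succ' _ m
      have hbeta : ∑ i ∈ Finset.range m, (fun i => x (i+1)) (i+1)
          = ∑ i ∈ Finset.range m, x (i+1+1) := rfl
      have hbeta2 : ∑ i ∈ Finset.range (m+1), (fun i => x i - 1) (i+1)
          = ∑ i ∈ Finset.range (m+1), (x (i+1) - 1) := rfl
      have hred' : ∀ i, 1 ≤ i → i < m → (fun i => x (i+1)) i ≤ (fun i => x (i+1)) (i+1) := by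
        intro i h1 h2
        exact hred (i+1) (by omega) (by omega)
      rcases Nat.eq_zero_or_pos (x 1) with h0 | h0
      · rw [psi_succ_zero m x h0, det_mat_zero m x h0]
        exact ih m (fun i => x (i+1)) (by omega) hred'
      · have hpos : ∀ i, 1 ≤ i → i ≤ m+1 → 1 ≤ x i := by
          intro i hi1 hi2
          exact le_trans h0 (red_mono (m+1) x hred i hi1 hi2)
        rw [psi_succ_pos m x hpos, det_mat_pos m x hpos]
        push_cast
        have e1 : (psi m (fun i => x (i+1)) : ℤ) = (mat m (fun i => x (i+1))).det :=
          ih m (fun i => x (i+1)) (by omega) hred'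
        have hsum2 : (∑ i ∈ Finset.range (m+1), (x (i+1) - 1)) + (m+1)
            = ∑ i ∈ Finset.range (m+1), x (i+1) := by
          have he : ∑ i ∈ Finset.range (m+1), x (i+1)
              = ∑ i ∈ Finset.range (m+1), ((x (i+1) - 1) + 1) := by
            apply Finset.sum_congr rfl
            intro i hi
            have hi' : i < m+1 := Finset.mem_range.1 hi
            have := hpos (i+1) (by omega) (by omega)
            omega
          rw [he, Finset.sum_add_distrib, Finset.sum_const, Finset.card_range, smul_eq_mul,
            mul_one]
        have e2 : (psi (m+1) (fun i => x i - 1) : ℤ) = (mat (m+1) (fun i => x i - 1)).det := by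
          apply ih (m+1) (fun i => x i - 1)
          · omega
          · intro i h1 h2
            have := hred i h1 h2
            omega
        rw [e1, e2]

/-- For a reduced vector `x = (x_1, …, x_n)` of nonnegative integers,
`ψ(x) = det A` where `A` is the `n × n` matrix with (1-based) entries
`A_{ij} = C(x_i + 1, j − i + 1)` (interpreted as `0` when `j − i + 1 < 0`
or `j − i + 1 > x_i + 1`). Here `i j : Fin n` denote the 1-based indices
`i + 1`, `j + 1`. -/
theorem stmt_16 (n : ℕ) (hn : 0 < n) (x : ℕ → ℕ)
    (hred : ∀ i, 1 ≤ i → i < n → x i ≤ x (i + 1)) :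
    (psi n x : ℤ) =
      Matrix.det (Matrix.of fun i j : Fin n =>
        if (i : ℕ) ≤ (j : ℕ) + 1 then
          ((x ((i : ℕ) + 1) + 1).choose ((j : ℕ) + 1 - (i : ℕ)) : ℤ)
        else 0) := by
  exact main_aux (n + ∑ i ∈ Finset.range n, x (i+1)) n x le_rfl hred
end
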